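/- arXiv:q-alg/9602026 — 2 statements merged into one kernel-verified Lean document; each statement's English description precedes it below -/
import Mathlib

section
/- Let V₁, V₂ be VOAs and M₁, M₂ irreducible modules over V₁, V₂ respectively. Then O(M₁ ⊗ M₂) = O(M₁) ⊗ M₂ + M₁ ⊗ O(M₂), and the map [m₁ ⊗ m₂] ↦ [m₁] ⊗ [m₂] is an isomorphism A(M₁ ⊗ M₂) ≅ A(M₁) ⊗ A(M₂) of bimodules over A(V₁) ⊗ A(V₂) ≅ A(V₁ ⊗ V₂). -/
open scoped TensorProduct BigOperators

noncomputable section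

/-- A vertex operator algebra structure (in coefficient form) on a complex vector space `V`.
`op n a b` is the coefficient `a(n)b` of `Y(a,z)b = ∑ₙ a(n)b z^{-n-1}`; `grade n` is the
weight space `V_n`; Borcherds' identity encodes the Jacobi identity. -/
structure VOA (V : Type) [AddCommGroup V] [Module ℂ V] where
  op : ℤ → V →ₗ[ℂ] V →ₗ[ℂ] V
  grade : ℤ → Submodule ℂ V
  vacuum : V
  omega : V
  isInternal : DirectSum.IsInternal grade
  vacuum_grade : vacuum ∈ grade 0
  omega_grade : omega ∈ grade 2
  trunc : ∀ a b : V, ∃ N : ℤ, ∀ n ≥ N, op n a b = 0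
  vacuum_op : ∀ (n : ℤ) (b : V), op n vacuum b = if n = -1 then b else 0
  create : ∀ (a : V) (n : ℤ), 0 ≤ n → op n a vacuum = 0
  create_neg_one : ∀ a : V, op (-1) a vacuum = a
  deriv : ∀ (n : ℤ) (a b : V), op n (op 0 omega a) b = (-n) • op (n - 1) a b
  L_zero_grade : ∀ n : ℤ, ∀ a ∈ grade n, op 1 omega a = (n : ℂ) • a
  L_neg_one_grade : ∀ n : ℤ, ∀ a ∈ grade n, op 0 omega a ∈ grade (n + 1)
  op_grade : ∀ (p q n : ℤ), ∀ a ∈ grade p, ∀ b ∈ grade q, op n a b ∈ grade (p + q - n - 1)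
  borcherds : ∀ (m n k : ℤ) (a b c : V),
    ∑ᶠ j : ℕ, Ring.choose m j • op (m + k - j) (op (n + j) a b) c =
    ∑ᶠ j : ℕ, ((-1 : ℤ) ^ j * Ring.choose n j) •
      (op (m + n - j) a (op (k + j) b c) -
        (if Even n then (1 : ℤ) else -1) • op (n + k - j) b (op (m + j) a c))

namespace VOA

variable {V : Type} [AddCommGroup V] [Module ℂ V] (A : VOA V)

/-- `A.circm w m a b = Res_z ((1+z)^w / z^m) Y(a,z)b = ∑_{i≥0} C(w,i) a(i-m)b`
(for `a` homogeneous of weight `w`). -/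
def circm (w m : ℤ) (a b : V) : V :=
  ∑ᶠ i : ℕ, Ring.choose w i • A.op ((i : ℤ) - m) a b

/-- Zhu's product `a * b = Res_z ((1+z)^{wt a} / z) Y(a,z)b` for `a` of weight `w`. -/
def star (w : ℤ) (a b : V) : V := A.circm w 1 a b

/-- The subspace `O(V)`, spanned by the elements `a ∘ b` with `a` homogeneous. -/
def Osub : Submodule ℂ V :=
  Submodule.span ℂ {x | ∃ (w : ℤ) (a b : V), a ∈ A.grade w ∧ x = A.circm w 2 a b}

end VOA

/-- A module over the vertex operator algebra `(V, A)` in coefficient form: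
`mop n a m = a(n)m`, with the `ℤ₊`-grading `grade`. -/
structure VMod {V : Type} [AddCommGroup V] [Module ℂ V] (A : VOA V)
    (M : Type) [AddCommGroup M] [Module ℂ M] where
  mop : ℤ → V →ₗ[ℂ] M →ₗ[ℂ] M
  grade : ℕ → Submodule ℂ M
  isInternal : DirectSum.IsInternal grade
  trunc : ∀ (a : V) (x : M), ∃ N : ℤ, ∀ n ≥ N, mop n a x = 0
  vacuum_mop : ∀ (n : ℤ) (x : M), mop n A.vacuum x = if n = -1 then x else 0
  deriv : ∀ (n : ℤ) (a : V) (x : M),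
    mop n (A.op 0 A.omega a) x = (-n) • mop (n - 1) a x
  mop_grade : ∀ (p : ℤ) (q : ℕ) (n : ℤ), ∀ a ∈ A.grade p, ∀ x ∈ grade q,
    (((q : ℤ) + p - n - 1 < 0 → mop n a x = 0) ∧
     ∀ r : ℕ, (r : ℤ) = (q : ℤ) + p - n - 1 → mop n a x ∈ grade r)
  borcherds : ∀ (m n k : ℤ) (a b : V) (x : M),
    ∑ᶠ j : ℕ, Ring.choose m j • mop (m + k - j) (A.op (n + j) a b) x =
    ∑ᶠ j : ℕ, ((-1 : ℤ) ^ j * Ring.choose n j) •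
      (mop (m + n - j) a (mop (k + j) b x) -
        (if Even n then (1 : ℤ) else -1) • mop (n + k - j) b (mop (m + j) a x))

namespace VMod

variable {V : Type} [AddCommGroup V] [Module ℂ V] {A : VOA V}
variable {M : Type} [AddCommGroup M] [Module ℂ M] (S : VMod A M)

/-- `Res_z ((1+z)^w / z^m) Y_M(a,z)x`. -/
def circm (w m : ℤ) (a : V) (x : M) : M :=
  ∑ᶠ i : ℕ, Ring.choose w i • S.mop ((i : ℤ) - m) a x

/-- The subspace `O(M)` spanned by `a ∘ x = Res_z ((1+z)^{wt a}/z²) Y_M(a,z)x`. -/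
def Osub : Submodule ℂ M :=
  Submodule.span ℂ {y | ∃ (w : ℤ) (a : V) (x : M), a ∈ A.grade w ∧ y = S.circm w 2 a x}

/-- The left action of `A(V)` on `A(M)` at the level of representatives:
`a · x = Res_z ((1+z)^{wt a}/z) Y_M(a,z)x`. -/
def actL (w : ℤ) (a : V) (x : M) : M := S.circm w 1 a x

/-- The right action of `A(V)` on `A(M)` at the level of representatives:
`x · a = Res_z ((1+z)^{wt a - 1}/z) Y_M(a,z)x`. -/
def actR (w : ℤ) (a : V) (x : M) : M :=
  ∑ᶠ i : ℕ, Ring.choose (w - 1) i • S.mop ((i : ℤ) - 1) a x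

/-- A submodule invariant under all the mode operators. -/
def Invariant (p : Submodule ℂ M) : Prop := ∀ (n : ℤ) (a : V), ∀ x ∈ p, S.mop n a x ∈ p

/-- Irreducibility of a `V`-module. -/
def Irreducible : Prop :=
  (⊤ : Submodule ℂ M) ≠ ⊥ ∧ ∀ p : Submodule ℂ M, S.Invariant p → p = ⊥ ∨ p = ⊤

/-- `L(0)` acts semisimply on `M`. -/
def L0Semisimple : Prop :=
  (⨆ μ : ℂ, Module.End.eigenspace (S.mop 1 A.omega) μ) = ⊤

/-- `M` is finitely generated over `V`. -/
def FG : Prop :=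
  ∃ s : Finset M, ∀ p : Submodule ℂ M, S.Invariant p → (↑s : Set M) ⊆ p → p = ⊤

/-- An invariant submodule that is simple in the lattice of invariant submodules. -/
def SimpleSub (p : Submodule ℂ M) : Prop :=
  S.Invariant p ∧ p ≠ ⊥ ∧ ∀ q : Submodule ℂ M, S.Invariant q → q ≤ p → q = ⊥ ∨ q = p

/-- Complete reducibility: `M` is a (direct) sum of irreducible submodules. -/
def CompletelyReducible : Prop :=
  sSup {p : Submodule ℂ M | S.SimpleSub p} = ⊤

end VMod

/-- Isomorphism of `V`-modules. -/
def VModIso {V : Type} [AddCommGroup V] [Module ℂ V] {A : VOA V}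
    {M M' : Type} [AddCommGroup M] [Module ℂ M] [AddCommGroup M'] [Module ℂ M']
    (S : VMod A M) (S' : VMod A M') : Prop :=
  ∃ e : M ≃ₗ[ℂ] M', ∀ (n : ℤ) (a : V) (x : M), e (S.mop n a x) = S'.mop n a (e x)

/-- A bundled module over the vertex operator algebra `(V, A)`. -/
structure VModBundle {V : Type} [AddCommGroup V] [Module ℂ V] (A : VOA V) where
  M : Type
  [acg : AddCommGroup M]
  [modc : Module ℂ M]
  S : VMod A M

attribute [instance] VModBundle.acg VModBundle.modc

/-- Rationality of a VOA (with the standing assumption that `L(0)` acts semisimply on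
all modules considered): finitely many irreducibles, and every finitely generated module
is completely reducible. -/
def VOA.Rational {V : Type} [AddCommGroup V] [Module ℂ V] (A : VOA V) : Prop :=
  (∃ (n : ℕ) (f : Fin n → VModBundle A),
    ∀ (M : Type) [AddCommGroup M] [Module ℂ M] (S : VMod A M),
      S.Irreducible → S.L0Semisimple → ∃ i, VModIso S (f i).S) ∧
  (∀ (M : Type) [AddCommGroup M] [Module ℂ M] (S : VMod A M),
      S.FG → S.L0Semisimple → S.CompletelyReducible)

section Tensor

variable {V₁ V₂ : Type} [AddCommGroup V₁] [Module ℂ V₁] [AddCommGroup V₂] [Module ℂ V₂]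

/-- The tensor product of two submodules, as a submodule of the tensor product. -/
def tsub (p : Submodule ℂ V₁) (q : Submodule ℂ V₂) : Submodule ℂ (V₁ ⊗[ℂ] V₂) :=
  LinearMap.range (TensorProduct.map p.subtype q.subtype)

/-- `T` is the tensor product VOA structure of `A` and `B` on `V₁ ⊗[ℂ] V₂`:
`Y(a ⊗ b, z) = Y(a,z) ⊗ Y(b,z)`, graded pieces `(V₁ ⊗ V₂)_n = ⊕_{p+q=n} (V₁)_p ⊗ (V₂)_q`,
vacuum `1 ⊗ 1` and Virasoro element `ω₁ ⊗ 1 + 1 ⊗ ω₂`. -/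
def IsTensorVOA (A : VOA V₁) (B : VOA V₂) (T : VOA (V₁ ⊗[ℂ] V₂)) : Prop :=
  (∀ (n : ℤ) (a c : V₁) (b d : V₂),
      T.op n (a ⊗ₜ[ℂ] b) (c ⊗ₜ[ℂ] d) =
        ∑ᶠ i : ℤ, (A.op i a c) ⊗ₜ[ℂ] (B.op (n - 1 - i) b d)) ∧
  (∀ n : ℤ, T.grade n = ⨆ p : ℤ, tsub (A.grade p) (B.grade (n - p))) ∧
  T.vacuum = A.vacuum ⊗ₜ[ℂ] B.vacuum ∧
  T.omega = A.omega ⊗ₜ[ℂ] B.vacuum + A.vacuum ⊗ₜ[ℂ] B.omega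

variable {M₁ M₂ : Type} [AddCommGroup M₁] [Module ℂ M₁] [AddCommGroup M₂] [Module ℂ M₂]

/-- `S` is the tensor product module structure of `S₁` and `S₂` over the tensor product
VOA `T`: `Y(a ⊗ b, z) = Y(a,z) ⊗ Y(b,z)` and `(M₁ ⊗ M₂)(n) = ⊕_{p+q=n} M₁(p) ⊗ M₂(q)`. -/
def IsTensorVMod {A : VOA V₁} {B : VOA V₂} {T : VOA (V₁ ⊗[ℂ] V₂)}
    (S₁ : VMod A M₁) (S₂ : VMod B M₂) (S : VMod T (M₁ ⊗[ℂ] M₂)) : Prop :=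
  (∀ (n : ℤ) (a : V₁) (b : V₂) (x : M₁) (y : M₂),
      S.mop n (a ⊗ₜ[ℂ] b) (x ⊗ₜ[ℂ] y) =
        ∑ᶠ i : ℤ, (S₁.mop i a x) ⊗ₜ[ℂ] (S₂.mop (n - 1 - i) b y)) ∧
  (∀ n : ℕ, S.grade n = ⨆ p : ℕ, ⨆ _ : p ≤ n, tsub (S₁.grade p) (S₂.grade (n - p)))

end Tensor

/-- An intertwining operator of type `(M³; M¹, M²)` in coefficient form:
`I(u, z)v = ∑_{α ∈ ℂ} (I α u v) z^{-α-1}`. -/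
structure IsIntertwiner {V : Type} [AddCommGroup V] [Module ℂ V] (A : VOA V)
    {M1 M2 M3 : Type} [AddCommGroup M1] [Module ℂ M1] [AddCommGroup M2] [Module ℂ M2]
    [AddCommGroup M3] [Module ℂ M3]
    (S1 : VMod A M1) (S2 : VMod A M2) (S3 : VMod A M3)
    (I : ℂ → M1 →ₗ[ℂ] M2 →ₗ[ℂ] M3) : Prop where
  trunc : ∀ (α : ℂ) (u : M1) (v : M2), ∃ N : ℕ, ∀ n : ℕ, n ≥ N → I (α + n) u v = 0
  deriv : ∀ (α : ℂ) (u : M1) (v : M2),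
    I α (S1.mop 0 A.omega u) v = (-α) • I (α - 1) u v
  jacobi : ∀ (m n : ℤ) (α : ℂ) (a : V) (u : M1) (v : M2),
    ∑ᶠ j : ℕ, Ring.choose m j • I (m + α - j) (S1.mop (n + j) a u) v =
    ∑ᶠ j : ℕ, ((-1 : ℤ) ^ j * Ring.choose n j) •
      (S3.mop (m + n - j) a (I (α + j) u v) -
        (if Even n then (1 : ℤ) else -1) • I (n + α - j) u (S2.mop (m + j) a v))

/-- The fusion rule: the dimension (as a cardinal) of the space of intertwining
operators of type `(M³; M¹, M²)`. -/
noncomputable def fusionRule {V : Type} [AddCommGroup V] [Module ℂ V] (A : VOA V)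
    {M1 M2 M3 : Type} [AddCommGroup M1] [Module ℂ M1] [AddCommGroup M2] [Module ℂ M2]
    [AddCommGroup M3] [Module ℂ M3]
    (S1 : VMod A M1) (S2 : VMod A M2) (S3 : VMod A M3) : Cardinal :=
  Module.rank ℂ (Submodule.span ℂ {I : ℂ → M1 →ₗ[ℂ] M2 →ₗ[ℂ] M3 | IsIntertwiner A S1 S2 S3 I})




/-! ### Auxiliary lemmas for the Zhu bimodule tensor theorem -/

section ZhuAux

open Finset

namespace VMod

variable {V : Type} [AddCommGroup V] [Module ℂ V] {A : VOA V}
variable {M : Type} [AddCommGroup M] [Module ℂ M] (S : VMod A M)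

/-- A nonnegative truncation bound, as a natural number. -/
lemma exists_nat_bound (a : V) (x : M) :
    ∃ N : ℕ, 1 ≤ N ∧ ∀ n : ℤ, (N : ℤ) ≤ n → S.mop n a x = 0 := by
  obtain ⟨N, hN⟩ := S.trunc a x
  refine ⟨max N.toNat 1, le_max_right _ _, fun n hn => hN n ?_⟩
  have h1 : (N.toNat : ℤ) ≤ (max N.toNat 1 : ℕ) := by
    exact_mod_cast Nat.le_max_left _ _
  omega

lemma circm_eq_sum {a : V} {x : M} {N : ℕ}
    (hN : ∀ n : ℤ, (N : ℤ) ≤ n → S.mop n a x = 0) (c m : ℤ) {K : ℕ}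
    (hK : (N : ℤ) + m ≤ (K : ℤ)) :
    S.circm c m a x = ∑ i ∈ range K, Ring.choose c i • S.mop ((i : ℤ) - m) a x := by
  apply finsum_eq_sum_of_support_subset
  intro i hi
  simp only [Function.mem_support, ne_eq, not_not] at hi ⊢
  by_contra hmem
  simp only [coe_range, Set.mem_Iio, not_lt] at hmem
  apply hi
  rw [hN ((i : ℤ) - m) (by exact_mod_cast by omega), smul_zero]

/-- Vanishing of `circm` for very negative exponents. -/
lemma circm_eq_zero {a : V} {x : M} {N : ℕ}
    (hN : ∀ n : ℤ, (N : ℤ) ≤ n → S.mop n a x = 0) (c : ℤ) {m : ℤ}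
    (hm : m ≤ -(N : ℤ)) : S.circm c m a x = 0 := by
  rw [S.circm_eq_sum hN c m (K := 0) (by omega)]
  simp

/-- Pascal recursion for `circm`. -/
lemma circm_pascal {a : V} {x : M} {N : ℕ}
    (hN : ∀ n : ℤ, (N : ℤ) ≤ n → S.mop n a x = 0) (c m : ℤ) :
    S.circm (c + 1) m a x = S.circm c m a x + S.circm c (m - 1) a x := by
  set K : ℕ := N + m.toNat + 1 with hKdef
  have hK : (N : ℤ) + m ≤ (K : ℤ) := by simp [hKdef]; push_cast; omega
  have hK' : (N : ℤ) + (m - 1) ≤ (K : ℤ) := by omega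
  have hK1 : (N : ℤ) + m ≤ ((K + 1 : ℕ) : ℤ) := by push_cast; omega
  rw [S.circm_eq_sum hN (c + 1) m (K := K + 1) hK1,
      S.circm_eq_sum hN c m (K := K + 1) (by push_cast; omega),
      S.circm_eq_sum hN c (m - 1) (K := K) hK']
  rw [Finset.sum_range_succ' _ K, Finset.sum_range_succ'
      (fun i => Ring.choose c i • S.mop ((i : ℤ) - m) a x) K]
  have harg : ∀ i : ℕ, (((i + 1 : ℕ) : ℤ)) - m = (i : ℤ) - (m - 1) := by
    intro i; push_cast; ring
  have hterm : ∀ i : ℕ,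
      Ring.choose (c + 1) (i + 1) • S.mop (((i + 1 : ℕ) : ℤ) - m) a x
      = Ring.choose c (i + 1) • S.mop (((i + 1 : ℕ) : ℤ) - m) a x
        + Ring.choose c i • S.mop ((i : ℤ) - (m - 1)) a x := by
    intro i
    rw [Ring.choose_succ_succ, add_smul, add_comm]
    congr 1
    rw [harg i]
  rw [Finset.sum_congr rfl (fun i _ => hterm i), Finset.sum_add_distrib]
  simp only [Nat.cast_zero, Ring.choose_zero_right]
  abel

end VMod

end ZhuAux


section ZhuAux2

open Finset

lemma zsmul_mem'' {M : Type} [AddCommGroup M] [Module ℂ M] (p : Submodule ℂ M) (z : ℤ) {v : M} (hv : v ∈ p) : z • v ∈ p := by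
  rw [← Int.cast_smul_eq_zsmul ℂ]; exact p.smul_mem _ hv

namespace VMod

variable {V : Type} [AddCommGroup V] [Module ℂ V] {A : VOA V}
variable {M : Type} [AddCommGroup M] [Module ℂ M] (S : VMod A M)



/-- Action of `L(-1)a` via `circm`. -/
lemma circm_Lneg {a : V} {x : M} {N : ℕ}
    (hN : ∀ n : ℤ, (N : ℤ) ≤ n → S.mop n a x = 0) (c m : ℤ) :
    S.circm (c + 1) m (A.op 0 A.omega a) x
      = m • S.circm (c + 1) (m + 1) a x - (c + 1) • S.circm c m a x := by
  set b := A.op 0 A.omega a with hb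
  have hNb : ∀ n : ℤ, ((N + 1 : ℕ) : ℤ) ≤ n → S.mop n b x = 0 := by
    intro n hn
    rw [hb, S.deriv n a x, hN (n - 1) (by push_cast at hn ⊢; omega), smul_zero]
  set Kb : ℕ := N + m.toNat + 1 with hKb
  have e1 : S.circm (c + 1) m b x
      = ∑ i ∈ range (Kb + 1), Ring.choose (c + 1) i • S.mop ((i : ℤ) - m) b x :=
    S.circm_eq_sum hNb (c + 1) m (by push_cast; simp [hKb]; push_cast; omega)
  have e2 : S.circm (c + 1) (m + 1) a x
      = ∑ i ∈ range (Kb + 1), Ring.choose (c + 1) i • S.mop ((i : ℤ) - (m + 1)) a x :=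
    S.circm_eq_sum hN (c + 1) (m + 1) (by push_cast; simp [hKb]; push_cast; omega)
  have e3 : S.circm c m a x
      = ∑ i ∈ range Kb, Ring.choose c i • S.mop ((i : ℤ) - m) a x :=
    S.circm_eq_sum hN c m (by simp [hKb]; push_cast; omega)
  rw [e1, e2, e3]
  have hterm : ∀ i : ℕ, Ring.choose (c + 1) i • S.mop ((i : ℤ) - m) b x
      = m • (Ring.choose (c + 1) i • S.mop ((i : ℤ) - (m + 1)) a x)
        - ((i : ℤ) * Ring.choose (c + 1) i) • S.mop ((i : ℤ) - (m + 1)) a x := by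
    intro i
    rw [hb, S.deriv ((i : ℤ) - m) a x, smul_smul, smul_smul, ← sub_smul]
    have harg : (i : ℤ) - m - 1 = (i : ℤ) - (m + 1) := by ring
    rw [harg]
    congr 1
    ring
  rw [Finset.sum_congr rfl (fun i _ => hterm i), Finset.sum_sub_distrib, ← Finset.smul_sum]
  congr 1
  -- ∑_{i<Kb+1} (i * C(c+1,i)) • mop (i-(m+1)) a x = (c+1) • ∑_{i<Kb} C(c,i) • mop (i-m) a x
  rw [Finset.sum_range_succ' (fun i => ((i : ℤ) * Ring.choose (c + 1) i) • S.mop ((i : ℤ) - (m + 1)) a x) Kb]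
  have hzero : (((0 : ℕ) : ℤ) * Ring.choose (c + 1) 0) • S.mop (((0 : ℕ) : ℤ) - (m + 1)) a x = 0 := by
    simp
  rw [hzero, add_zero]
  rw [Finset.smul_sum]
  refine Finset.sum_congr rfl fun i _ => ?_
  have hch : ((i + 1 : ℕ) : ℤ) * Ring.choose (c + 1) (i + 1) = (c + 1) * Ring.choose c i := by
    have := Ring.choose_smul_choose (c + 1) (n := i + 1) (k := 1) (by omega)
    simp only [Nat.choose_one_right, Ring.choose_one_right, Nat.add_sub_cancel] at this
    rw [show ((1 : ℕ) : ℤ) = 1 from rfl, add_sub_cancel_right] at this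
    rw [← this, nsmul_eq_mul]
  have harg2 : ((i + 1 : ℕ) : ℤ) - (m + 1) = (i : ℤ) - m := by push_cast; ring
  rw [hch, harg2, smul_smul]

/-- Key lemma (nat-indexed induction). -/
lemma circm_mem_Osub_nat : ∀ k : ℕ, ∀ (w : ℤ) (a : V), a ∈ A.grade w →
    ∀ x : M, S.circm w (2 + (k : ℤ)) a x ∈ S.Osub := by
  intro k
  induction k with
  | zero =>
    intro w a ha x
    norm_num
    exact Submodule.subset_span ⟨w, a, x, ha, rfl⟩
  | succ k ih =>
    intro w a ha x
    set m : ℤ := 2 + (k : ℤ) with hmdef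
    have hm : (2 : ℤ) ≤ m := by omega
    have hgoal : (2 : ℤ) + ((k + 1 : ℕ) : ℤ) = m + 1 := by push_cast; omega
    rw [hgoal]
    obtain ⟨N, _, hN⟩ := S.exists_nat_bound a x
    have hb : A.op 0 A.omega a ∈ A.grade (w + 1) := A.L_neg_one_grade w a ha
    have key := S.circm_Lneg hN w m
    have h1 : S.circm (w + 1) m (A.op 0 A.omega a) x ∈ S.Osub := ih (w + 1) _ hb x
    have h2 : S.circm w m a x ∈ S.Osub := ih w a ha x
    have h3 : S.circm (w + 1) (m + 1) a x = S.circm w (m + 1) a x + S.circm w m a x := by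
      have := S.circm_pascal hN w (m + 1)
      simpa using this
    have h4 : m • S.circm w (m + 1) a x ∈ S.Osub := by
      have heq : m • S.circm w (m + 1) a x
          = S.circm (w + 1) m (A.op 0 A.omega a) x + (w + 1) • S.circm w m a x
            - m • S.circm w m a x := by
        rw [key, h3, smul_add]; abel
      rw [heq]
      exact Submodule.sub_mem _ (Submodule.add_mem _ h1 (zsmul_mem'' _ _ h2))
        (zsmul_mem'' _ _ h2)
    have hm0 : (m : ℂ) ≠ 0 := by
      simp only [ne_eq, Int.cast_eq_zero]; omega
    have : S.circm w (m + 1) a x = (m : ℂ)⁻¹ • (m • S.circm w (m + 1) a x) := by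
      rw [← Int.cast_smul_eq_zsmul ℂ, smul_smul, inv_mul_cancel₀ hm0, one_smul]
    rw [this]
    exact Submodule.smul_mem _ _ h4

/-- Key lemma: `Res (1+z)^w / z^m Y(a,z)x ∈ O(M)` for all `m ≥ 2`. -/
lemma circm_mem_Osub {w : ℤ} {a : V} (ha : a ∈ A.grade w) (x : M) {m : ℤ}
    (hm : 2 ≤ m) : S.circm w m a x ∈ S.Osub := by
  have : m = 2 + (((m - 2).toNat : ℕ) : ℤ) := by omega
  rw [this]
  exact S.circm_mem_Osub_nat (m - 2).toNat w a ha x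

end VMod

end ZhuAux2


section ZhuAux3

open Finset

namespace VMod

variable {V : Type} [AddCommGroup V] [Module ℂ V] {A : VOA V}
variable {M : Type} [AddCommGroup M] [Module ℂ M] (S : VMod A M)

/-- Alternating reduction: `circm (q-1) (1+j) ≡ (-1)^j circm (q-1) 1` mod `O(M)`. -/
lemma circm_alt {q : ℤ} {b : V} (hb : b ∈ A.grade q) (y : M) :
    ∀ j : ℕ, S.circm (q - 1) (1 + (j : ℤ)) b y
      - ((-1 : ℤ) ^ j) • S.circm (q - 1) 1 b y ∈ S.Osub := by
  obtain ⟨N, _, hN⟩ := S.exists_nat_bound b y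
  intro j
  induction j with
  | zero => simp
  | succ j ih =>
    have hpas := S.circm_pascal hN (q - 1) (2 + (j : ℤ))
    rw [sub_add_cancel] at hpas
    have harg1 : (2 : ℤ) + (j : ℤ) - 1 = 1 + (j : ℤ) := by ring
    have harg2 : (1 : ℤ) + ((j + 1 : ℕ) : ℤ) = 2 + (j : ℤ) := by push_cast; ring
    rw [harg1] at hpas
    rw [harg2]
    have heq : S.circm (q - 1) (2 + (j : ℤ)) b y
        - ((-1 : ℤ) ^ (j + 1)) • S.circm (q - 1) 1 b y
        = S.circm q (2 + (j : ℤ)) b y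
          - (S.circm (q - 1) (1 + (j : ℤ)) b y
            - ((-1 : ℤ) ^ j) • S.circm (q - 1) 1 b y) := by
      rw [hpas, pow_succ]
      push_cast
      rw [mul_neg_one, neg_smul]
      abel
    rw [heq]
    exact Submodule.sub_mem _ (S.circm_mem_Osub hb y (by omega)) ih

/-- Telescoping sum of alternating `circm`s. -/
lemma circm_telescope (p : ℤ) (a : V) (x : M) {N : ℕ}
    (hN : ∀ n : ℤ, (N : ℤ) ≤ n → S.mop n a x = 0) :
    ∀ K : ℕ, ∑ j ∈ range K, ((-1 : ℤ) ^ j) • S.circm p (-(j : ℤ)) a x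
      = S.circm (p - 1) 0 a x - ((-1 : ℤ) ^ K) • S.circm (p - 1) (-(K : ℤ)) a x := by
  intro K
  induction K with
  | zero => simp
  | succ K ih =>
    rw [Finset.sum_range_succ, ih]
    have hpas := S.circm_pascal hN (p - 1) (-(K : ℤ))
    rw [sub_add_cancel] at hpas
    have harg : -(K : ℤ) - 1 = -((K + 1 : ℕ) : ℤ) := by push_cast; ring
    rw [harg] at hpas
    rw [hpas, pow_succ, mul_neg_one, neg_smul, smul_add]
    abel

/-- `a·x = x·a + ∑_j (-1)^j Res (1+z)^p z^j Y(a,z)x` (exact identity). -/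
lemma actL_eq_actR_add (p : ℤ) (a : V) (x : M) {N : ℕ}
    (hN : ∀ n : ℤ, (N : ℤ) ≤ n → S.mop n a x = 0) {K : ℕ} (hK : N ≤ K) :
    S.circm p 1 a x = S.circm (p - 1) 1 a x
      + ∑ j ∈ range K, ((-1 : ℤ) ^ j) • S.circm p (-(j : ℤ)) a x := by
  rw [S.circm_telescope p a x hN K]
  have h0 : S.circm (p - 1) (-(K : ℤ)) a x = 0 :=
    S.circm_eq_zero hN (p - 1) (by exact_mod_cast by omega)
  rw [h0, smul_zero, sub_zero]
  have hpas := S.circm_pascal hN (p - 1) 1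
  rw [sub_add_cancel] at hpas
  rw [hpas]
  norm_num
end VMod

end ZhuAux3


section ZhuGen

open Finset TensorProduct

variable {V₁ V₂ : Type} [AddCommGroup V₁] [Module ℂ V₁] [AddCommGroup V₂] [Module ℂ V₂]
variable {M₁ M₂ : Type} [AddCommGroup M₁] [Module ℂ M₁] [AddCommGroup M₂] [Module ℂ M₂]
variable {A : VOA V₁} {B : VOA V₂} {T : VOA (V₁ ⊗[ℂ] V₂)}
variable {S₁ : VMod A M₁} {S₂ : VMod B M₂} {S : VMod T (M₁ ⊗[ℂ] M₂)}

/-- Finset-sum helper: two index sets containing the support give the same sum. -/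
lemma sum_eq_sum_of_support_sub {γ : Type*} [AddCommMonoid γ] {f : ℤ → γ}
    {P Q : Finset ℤ} (h : ∀ k, f k ≠ 0 → k ∈ P ∧ k ∈ Q) :
    ∑ k ∈ P, f k = ∑ k ∈ Q, f k := by
  rw [Finset.sum_subset (Finset.subset_union_left (s₂ := Q))
      (fun k _ hk => by_contra fun hf => hk (h k hf).1),
    Finset.sum_subset (Finset.subset_union_right (s₁ := P))
      (fun k _ hk => by_contra fun hf => hk (h k hf).2)]

lemma zsmul_tmul_zsmul {M₁ M₂ : Type} [AddCommGroup M₁] [Module ℂ M₁]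
    [AddCommGroup M₂] [Module ℂ M₂] (z₁ z₂ : ℤ) (u : M₁) (v : M₂) :
    (z₁ • u) ⊗ₜ[ℂ] (z₂ • v) = (z₁ * z₂) • (u ⊗ₜ[ℂ] v) := by
  rw [← Int.cast_smul_eq_zsmul ℂ z₁, ← Int.cast_smul_eq_zsmul ℂ z₂,
    ← Int.cast_smul_eq_zsmul ℂ (z₁ * z₂), tmul_smul, smul_tmul', smul_smul,
    Int.cast_mul, mul_comm ((z₂ : ℂ)) _, smul_tmul']

lemma tmop_eq_sum (hS : IsTensorVMod S₁ S₂ S) {a : V₁} {x : M₁} {N₁ : ℕ}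
    (h₁ : ∀ n : ℤ, (N₁ : ℤ) ≤ n → S₁.mop n a x = 0)
    {b : V₂} {y : M₂} {N₂ : ℕ}
    (h₂ : ∀ n : ℤ, (N₂ : ℤ) ≤ n → S₂.mop n b y = 0) (n : ℤ) :
    S.mop n (a ⊗ₜ[ℂ] b) (x ⊗ₜ[ℂ] y)
      = ∑ k ∈ Finset.Ico (n - (N₂ : ℤ)) (N₁ : ℤ),
          S₁.mop k a x ⊗ₜ[ℂ] S₂.mop (n - 1 - k) b y := by
  rw [hS.1 n a b x y]
  apply finsum_eq_sum_of_support_subset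
  intro k hk
  simp only [Function.mem_support, ne_eq] at hk
  simp only [Finset.coe_Ico, Set.mem_Ico]
  constructor
  · by_contra hlt
    push_neg at hlt
    exact hk (by rw [h₂ (n - 1 - k) (by omega), tmul_zero])
  · by_contra hge
    push_neg at hge
    exact hk (by rw [h₁ k hge, zero_tmul])

/-- The mode operators of the tensor module are eventually zero on pure tensors. -/
lemma tmop_bound (hS : IsTensorVMod S₁ S₂ S) {a : V₁} {x : M₁} {N₁ : ℕ}
    (h₁ : ∀ n : ℤ, (N₁ : ℤ) ≤ n → S₁.mop n a x = 0)
    {b : V₂} {y : M₂} {N₂ : ℕ}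
    (h₂ : ∀ n : ℤ, (N₂ : ℤ) ≤ n → S₂.mop n b y = 0) :
    ∀ n : ℤ, ((N₁ + N₂ : ℕ) : ℤ) ≤ n → S.mop n (a ⊗ₜ[ℂ] b) (x ⊗ₜ[ℂ] y) = 0 := by
  intro n hn
  rw [tmop_eq_sum hS h₁ h₂ n, Finset.Ico_eq_empty (by push_cast at hn ⊢; omega),
    Finset.sum_empty]

/-- The master factorization lemma:
`Res (1+z)^{c₁+c₂} z^{-n} (Y(a,z)x ⊗ Y(b,z)y) = ∑ₘ (Res (1+z)^{c₁} z^{-m} Y(a,z)x) ⊗ (Res (1+z)^{c₂} z^{-(n+1-m)} Y(b,z)y)`. -/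
lemma gen_factor (hS : IsTensorVMod S₁ S₂ S) (c₁ c₂ n : ℤ) {a : V₁} {x : M₁} {N₁ : ℕ}
    (h₁ : ∀ n' : ℤ, (N₁ : ℤ) ≤ n' → S₁.mop n' a x = 0)
    {b : V₂} {y : M₂} {N₂ : ℕ}
    (h₂ : ∀ n' : ℤ, (N₂ : ℤ) ≤ n' → S₂.mop n' b y = 0) :
    S.circm (c₁ + c₂) n (a ⊗ₜ[ℂ] b) (x ⊗ₜ[ℂ] y)
      = ∑ m ∈ Finset.Ico (1 - (N₁ : ℤ)) (n + 1 + (N₂ : ℤ)),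
          (S₁.circm c₁ m a x) ⊗ₜ[ℂ] (S₂.circm c₂ (n + 1 - m) b y) := by
  classical
  set I : ℕ := (n + 1).toNat + n.toNat + N₁ + N₂ with hI
  have hIZ : (n : ℤ) + 1 + N₁ + N₂ ≤ (I : ℤ) ∧ (0:ℤ) ≤ (I:ℤ) := by
    constructor
    · simp only [hI]; push_cast; have := Int.self_le_toNat (n+1); omega
    · positivity
  -- the common elementary term
  set h : ℕ → ℕ → ℤ → (M₁ ⊗[ℂ] M₂) := fun s t k =>
    (Ring.choose c₁ s * Ring.choose c₂ t) •
      (S₁.mop k a x ⊗ₜ[ℂ] S₂.mop ((s : ℤ) + t - n - 1 - k) b y) with hh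
  have hvan : ∀ (s t : ℕ) (k : ℤ), ((N₁ : ℤ) ≤ k ∨ (N₂ : ℤ) ≤ (s : ℤ) + t - n - 1 - k) →
      h s t k = 0 := by
    intro s t k hk
    rcases hk with hk | hk
    · rw [hh]; simp only; rw [h₁ k hk, zero_tmul, smul_zero]
    · rw [hh]; simp only; rw [h₂ _ hk, tmul_zero, smul_zero]
  set Kset : Finset ℤ := Finset.Ico (-n - (N₂ : ℤ)) (N₁ : ℤ) with hKset
  set Mset : Finset ℤ := Finset.Ico (1 - (N₁ : ℤ)) (n + 1 + (N₂ : ℤ)) with hMset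
  -- Step 1: LHS as a double sum
  have hbig : ∀ n' : ℤ, ((N₁ + N₂ : ℕ) : ℤ) ≤ n' → S.mop n' (a ⊗ₜ[ℂ] b) (x ⊗ₜ[ℂ] y) = 0 :=
    tmop_bound hS h₁ h₂
  have step1 : S.circm (c₁ + c₂) n (a ⊗ₜ[ℂ] b) (x ⊗ₜ[ℂ] y)
      = ∑ i ∈ range I, Ring.choose (c₁ + c₂) i •
          ∑ k ∈ Kset, S₁.mop k a x ⊗ₜ[ℂ] S₂.mop ((i : ℤ) - n - 1 - k) b y := by
    rw [S.circm_eq_sum hbig (c₁ + c₂) n (K := I) (by push_cast; omega)]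
    refine Finset.sum_congr rfl fun i _ => ?_
    rw [tmop_eq_sum hS h₁ h₂ ((i : ℤ) - n)]
    congr 1
    refine sum_eq_sum_of_support_sub fun k hk => ?_
    have hk1 : ¬ ((N₁ : ℤ) ≤ k) := fun hle => hk (by rw [h₁ k hle, zero_tmul])
    have hk2 : ¬ ((N₂ : ℤ) ≤ (i : ℤ) - n - 1 - k) := fun hle => hk (by rw [h₂ _ hle, tmul_zero])
    push_neg at hk1 hk2
    constructor
    · simp only [Finset.mem_Ico]; omega
    · simp only [hKset, Finset.mem_Ico]; omega
  -- Step 2: Vandermonde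
  have step2 : S.circm (c₁ + c₂) n (a ⊗ₜ[ℂ] b) (x ⊗ₜ[ℂ] y)
      = ∑ i ∈ range I, ∑ p ∈ Finset.HasAntidiagonal.antidiagonal i, ∑ k ∈ Kset, h p.1 p.2 k := by
    rw [step1]
    refine Finset.sum_congr rfl fun i _ => ?_
    rw [Ring.add_choose_eq i (Commute.all c₁ c₂), Finset.sum_smul, Finset.sum_congr rfl]
    intro p hp
    have hpi : (i : ℤ) = (p.1 : ℤ) + (p.2 : ℤ) := by
      exact_mod_cast (Finset.HasAntidiagonal.mem_antidiagonal.mp hp).symm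
    rw [Finset.smul_sum]
    refine Finset.sum_congr rfl fun k _ => ?_
    rw [hh]
    simp only
    rw [hpi]
  -- Step 3: collapse (i, antidiagonal) into a product range
  have step3 : ∑ i ∈ range I, ∑ p ∈ Finset.HasAntidiagonal.antidiagonal i, ∑ k ∈ Kset, h p.1 p.2 k
      = ∑ s ∈ range I, ∑ t ∈ range I, ∑ k ∈ Kset, h s t k := by
    have hdisj : (↑(range I) : Set ℕ).PairwiseDisjoint Finset.HasAntidiagonal.antidiagonal := by
      intro i _ j _ hij
      simp only [Function.onFun, Finset.disjoint_left]
      intro p hpi hpj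
      exact hij ((Finset.HasAntidiagonal.mem_antidiagonal.mp hpi).symm.trans (Finset.HasAntidiagonal.mem_antidiagonal.mp hpj))
    rw [← Finset.sum_biUnion hdisj]
    have hbiU : (range I).biUnion Finset.HasAntidiagonal.antidiagonal
        = (range I ×ˢ range I).filter (fun p => p.1 + p.2 < I) := by
      ext p
      simp only [Finset.mem_biUnion, Finset.mem_range, Finset.HasAntidiagonal.mem_antidiagonal,
        Finset.mem_filter, Finset.mem_product]
      constructor
      · rintro ⟨i, hi, rfl⟩; omega
      · rintro ⟨⟨h1, h2⟩, h3⟩; exact ⟨p.1 + p.2, h3, rfl⟩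
    rw [hbiU]
    rw [Finset.sum_filter_of_ne ?hne]
    · rw [Finset.sum_product]
    case hne =>
      intro p hp hne
      by_contra hcon
      push_neg at hcon
      apply hne
      refine Finset.sum_eq_zero fun k hk => ?_
      simp only [hKset, Finset.mem_Ico] at hk
      refine hvan p.1 p.2 k (Or.inr ?_)
      have : (I : ℤ) ≤ (p.1 : ℤ) + (p.2 : ℤ) := by exact_mod_cast hcon
      omega
  -- Step 4: RHS as the same triple sum
  have step4 : ∑ m ∈ Mset, (S₁.circm c₁ m a x) ⊗ₜ[ℂ] (S₂.circm c₂ (n + 1 - m) b y)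
      = ∑ s ∈ range I, ∑ t ∈ range I, ∑ k ∈ Kset, h s t k := by
    have hrw : ∀ m ∈ Mset, (S₁.circm c₁ m a x) ⊗ₜ[ℂ] (S₂.circm c₂ (n + 1 - m) b y)
        = ∑ s ∈ range I, ∑ t ∈ range I, h s t ((s : ℤ) - m) := by
      intro m hm
      simp only [hMset, Finset.mem_Ico] at hm
      rw [S₁.circm_eq_sum h₁ c₁ m (K := I) (by omega),
          S₂.circm_eq_sum h₂ c₂ (n + 1 - m) (K := I) (by omega)]
      rw [sum_tmul]
      refine Finset.sum_congr rfl fun s _ => ?_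
      rw [tmul_sum]
      refine Finset.sum_congr rfl fun t _ => ?_
      rw [zsmul_tmul_zsmul, hh]
      simp only
      congr 3
      ring
    rw [Finset.sum_congr rfl hrw, Finset.sum_comm]
    refine Finset.sum_congr rfl fun s _ => ?_
    rw [Finset.sum_comm]
    refine Finset.sum_congr rfl fun t _ => ?_
    -- reindex m ↦ k = s - m, then change index set
    have hre : ∑ m ∈ Mset, h s t ((s : ℤ) - m)
        = ∑ k ∈ Finset.Ico ((s : ℤ) - n - (N₂ : ℤ)) ((s : ℤ) + (N₁ : ℤ)), h s t k := by
      refine Finset.sum_nbij' (fun m => (s : ℤ) - m) (fun k => (s : ℤ) - k) ?_ ?_ ?_ ?_ ?_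
      · intro m hm; simp only [hMset, Finset.mem_Ico] at hm ⊢; omega
      · intro k hk; simp only [hMset, Finset.mem_Ico] at hk ⊢; omega
      · intro m _; ring
      · intro k _; ring
      · intro m _; rfl
    rw [hre]
    refine sum_eq_sum_of_support_sub fun k hk => ?_
    have hk1 : ¬ ((N₁ : ℤ) ≤ k) := fun hle => hk (hvan s t k (Or.inl hle))
    have hk2 : ¬ ((N₂ : ℤ) ≤ (s : ℤ) + t - n - 1 - k) := fun hle => hk (hvan s t k (Or.inr hle))
    push_neg at hk1 hk2
    constructor
    · simp only [Finset.mem_Ico]; omega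
    · simp only [hKset, Finset.mem_Ico]; omega
  rw [step2, step3, ← step4]

end ZhuGen


section ZhuAux5

open Finset

namespace VMod

variable {V : Type} [AddCommGroup V] [Module ℂ V] {A : VOA V}
variable {M : Type} [AddCommGroup M] [Module ℂ M] (S : VMod A M)

lemma circm_zero_left (c m : ℤ) (z : M) : S.circm c m (0 : V) z = 0 := by
  unfold VMod.circm
  have : ∀ i : ℕ, Ring.choose c i • S.mop ((i : ℤ) - m) (0 : V) z = 0 := by
    intro i
    rw [map_zero, LinearMap.zero_apply, smul_zero]
  rw [finsum_congr this, finsum_zero]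

lemma circm_add_left (c m : ℤ) (u₁ u₂ : V) (z : M) :
    S.circm c m (u₁ + u₂) z = S.circm c m u₁ z + S.circm c m u₂ z := by
  obtain ⟨N₁, _, h₁⟩ := S.exists_nat_bound u₁ z
  obtain ⟨N₂, _, h₂⟩ := S.exists_nat_bound u₂ z
  have h₃ : ∀ n : ℤ, ((N₁ + N₂ : ℕ) : ℤ) ≤ n → S.mop n (u₁ + u₂) z = 0 := by
    intro n hn
    rw [map_add, LinearMap.add_apply, h₁ n (by push_cast at hn ⊢; omega),
      h₂ n (by push_cast at hn ⊢; omega), add_zero]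
  set K : ℕ := N₁ + N₂ + m.toNat with hK
  have hKb : ((N₁ + N₂ : ℕ) : ℤ) + m ≤ (K : ℤ) := by simp only [hK]; push_cast; omega
  rw [S.circm_eq_sum h₃ c m hKb,
    S.circm_eq_sum h₁ c m (K := K) (by push_cast at hKb ⊢; omega),
    S.circm_eq_sum h₂ c m (K := K) (by push_cast at hKb ⊢; omega),
    ← Finset.sum_add_distrib]
  refine Finset.sum_congr rfl fun i _ => ?_
  rw [map_add, LinearMap.add_apply, smul_add]

lemma circm_smul_left (c m : ℤ) (r : ℂ) (u : V) (z : M) :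
    S.circm c m (r • u) z = r • S.circm c m u z := by
  obtain ⟨N₁, _, h₁⟩ := S.exists_nat_bound u z
  have h₂ : ∀ n : ℤ, ((N₁ : ℕ) : ℤ) ≤ n → S.mop n (r • u) z = 0 := by
    intro n hn
    rw [map_smul, LinearMap.smul_apply, h₁ n hn, smul_zero]
  set K : ℕ := N₁ + m.toNat with hK
  have hKb : ((N₁ : ℕ) : ℤ) + m ≤ (K : ℤ) := by simp only [hK]; push_cast; omega
  rw [S.circm_eq_sum h₂ c m hKb, S.circm_eq_sum h₁ c m hKb, Finset.smul_sum]
  refine Finset.sum_congr rfl fun i _ => ?_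
  rw [map_smul, LinearMap.smul_apply, smul_comm]

lemma circm_add_right (c m : ℤ) (u : V) (z₁ z₂ : M) :
    S.circm c m u (z₁ + z₂) = S.circm c m u z₁ + S.circm c m u z₂ := by
  obtain ⟨N₁, _, h₁⟩ := S.exists_nat_bound u z₁
  obtain ⟨N₂, _, h₂⟩ := S.exists_nat_bound u z₂
  have h₃ : ∀ n : ℤ, ((N₁ + N₂ : ℕ) : ℤ) ≤ n → S.mop n u (z₁ + z₂) = 0 := by
    intro n hn
    rw [map_add, h₁ n (by push_cast at hn ⊢; omega),
      h₂ n (by push_cast at hn ⊢; omega), add_zero]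
  set K : ℕ := N₁ + N₂ + m.toNat with hK
  have hKb : ((N₁ + N₂ : ℕ) : ℤ) + m ≤ (K : ℤ) := by simp only [hK]; push_cast; omega
  rw [S.circm_eq_sum h₃ c m hKb,
    S.circm_eq_sum h₁ c m (K := K) (by push_cast at hKb ⊢; omega),
    S.circm_eq_sum h₂ c m (K := K) (by push_cast at hKb ⊢; omega),
    ← Finset.sum_add_distrib]
  refine Finset.sum_congr rfl fun i _ => ?_
  rw [map_add, smul_add]

/-- `circm` against the vacuum in the second slot. -/
lemma circm_vac (y : M) (k : ℤ) :
    S.circm 0 k A.vacuum y = if k = 1 then y else 0 := by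
  unfold VMod.circm
  rw [finsum_eq_single _ 0 ?h]
  · rw [Ring.choose_zero_right, one_smul, S.vacuum_mop]
    simp only [Nat.cast_zero, zero_sub]
    by_cases hk : k = 1
    · subst hk; norm_num
    · rw [if_neg (by omega), if_neg hk]
  case h =>
    intro i hi
    obtain ⟨j, rfl⟩ := Nat.exists_eq_succ_of_ne_zero hi
    rw [Ring.choose_zero_succ, zero_smul]

lemma vac_bound (y : M) : ∀ n : ℤ, ((1 : ℕ) : ℤ) ≤ n → S.mop n A.vacuum y = 0 := by
  intro n hn
  rw [S.vacuum_mop, if_neg (by omega)]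

end VMod

end ZhuAux5


section ZhuAux5b
namespace VMod
variable {V : Type} [AddCommGroup V] [Module ℂ V] {A : VOA V}
variable {M : Type} [AddCommGroup M] [Module ℂ M] (S : VMod A M)

lemma circm_zero_right (c m : ℤ) (u : V) : S.circm c m u (0 : M) = 0 := by
  unfold VMod.circm
  have : ∀ i : ℕ, Ring.choose c i • S.mop ((i : ℤ) - m) u (0 : M) = 0 := by
    intro i
    rw [map_zero, smul_zero]
  rw [finsum_congr this, finsum_zero]

end VMod
end ZhuAux5b


section ZhuMain

open Finset TensorProduct

variable {V₁ V₂ : Type} [AddCommGroup V₁] [Module ℂ V₁] [AddCommGroup V₂] [Module ℂ V₂]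
variable {M₁ M₂ : Type} [AddCommGroup M₁] [Module ℂ M₁] [AddCommGroup M₂] [Module ℂ M₂]
variable {A : VOA V₁} {B : VOA V₂} {T : VOA (V₁ ⊗[ℂ] V₂)}
variable {S₁ : VMod A M₁} {S₂ : VMod B M₂} {S : VMod T (M₁ ⊗[ℂ] M₂)}

lemma tmul_mem_tsub {p : Submodule ℂ M₁} {q : Submodule ℂ M₂} {u : M₁} {v : M₂}
    (hu : u ∈ p) (hv : v ∈ q) : u ⊗ₜ[ℂ] v ∈ tsub p q :=
  ⟨(⟨u, hu⟩ : p) ⊗ₜ[ℂ] (⟨v, hv⟩ : q), by rw [TensorProduct.map_tmul]; rfl⟩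

lemma mem_Tgrade (hT : IsTensorVOA A B T) {p q : ℤ} {a : V₁} {b : V₂}
    (ha : a ∈ A.grade p) (hb : b ∈ B.grade q) : a ⊗ₜ[ℂ] b ∈ T.grade (p + q) := by
  rw [hT.2.1 (p + q)]
  refine Submodule.mem_iSup_of_mem p (tmul_mem_tsub ha ?_)
  rwa [add_sub_cancel_left]

lemma circm_tmul_vac (hS : IsTensorVMod S₁ S₂ S) {a : V₁} {x : M₁} {N₁ : ℕ}
    (h₁ : ∀ n' : ℤ, (N₁ : ℤ) ≤ n' → S₁.mop n' a x = 0)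
    (w m : ℤ) (hm : 1 - (N₁ : ℤ) ≤ m) (y : M₂) :
    S.circm w m (a ⊗ₜ[ℂ] B.vacuum) (x ⊗ₜ[ℂ] y) = (S₁.circm w m a x) ⊗ₜ[ℂ] y := by
  have h₂ := S₂.vac_bound y
  have h0 : S.circm w m (a ⊗ₜ[ℂ] B.vacuum) (x ⊗ₜ[ℂ] y)
      = S.circm (w + 0) m (a ⊗ₜ[ℂ] B.vacuum) (x ⊗ₜ[ℂ] y) := by rw [add_zero]
  rw [h0, gen_factor hS w 0 m h₁ h₂]
  have hmem : m ∈ Finset.Ico (1 - (N₁ : ℤ)) (m + 1 + ((1 : ℕ) : ℤ)) := by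
    rw [Finset.mem_Ico]; exact ⟨by omega, by omega⟩
  rw [Finset.sum_eq_single_of_mem m hmem ?hz]
  · rw [S₂.circm_vac y (m + 1 - m), if_pos (by omega)]
  case hz =>
    intro m' _ hne
    rw [S₂.circm_vac y (m + 1 - m'), if_neg (by omega), tmul_zero]

lemma circm_vac_tmul (hS : IsTensorVMod S₁ S₂ S) {b : V₂} {y : M₂} {N₂ : ℕ}
    (h₂ : ∀ n' : ℤ, (N₂ : ℤ) ≤ n' → S₂.mop n' b y = 0)
    (w m : ℤ) (hm : 1 - (N₂ : ℤ) ≤ m) (x : M₁) :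
    S.circm w m (A.vacuum ⊗ₜ[ℂ] b) (x ⊗ₜ[ℂ] y) = x ⊗ₜ[ℂ] (S₂.circm w m b y) := by
  have h₁ := S₁.vac_bound x
  have h0 : S.circm w m (A.vacuum ⊗ₜ[ℂ] b) (x ⊗ₜ[ℂ] y)
      = S.circm (0 + w) m (A.vacuum ⊗ₜ[ℂ] b) (x ⊗ₜ[ℂ] y) := by rw [zero_add]
  rw [h0, gen_factor hS 0 w m h₁ h₂]
  have hmem : (1 : ℤ) ∈ Finset.Ico (1 - ((1 : ℕ) : ℤ)) (m + 1 + (N₂ : ℤ)) := by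
    rw [Finset.mem_Ico]; exact ⟨by omega, by omega⟩
  rw [Finset.sum_eq_single_of_mem 1 hmem ?hz]
  · rw [S₁.circm_vac x 1, if_pos rfl]
    have h1 : m + 1 - (1 : ℤ) = m := by ring
    rw [h1]
  case hz =>
    intro m' _ hne
    rw [S₁.circm_vac x m', if_neg hne, zero_tmul]

/-- `O(M₁) ⊗ M₂ ⊆ O(M₁ ⊗ M₂)`. -/
lemma tsub_left_le_Osub (hT : IsTensorVOA A B T) (hS : IsTensorVMod S₁ S₂ S) :
    tsub S₁.Osub (⊤ : Submodule ℂ M₂) ≤ S.Osub := by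
  show LinearMap.range _ ≤ _
  rw [TensorProduct.range_map_eq_span_tmul]
  refine Submodule.span_le.2 ?_
  rintro _ ⟨o, yy, rfl⟩
  simp only [Submodule.coe_subtype]
  refine Submodule.span_induction (p := fun v _ => v ⊗ₜ[ℂ] (yy : M₂) ∈ S.Osub)
    ?_ ?_ ?_ ?_ o.2
  · rintro _ ⟨w, a, x, ha, rfl⟩
    show S₁.circm w 2 a x ⊗ₜ[ℂ] (yy : M₂) ∈ S.Osub
    obtain ⟨N₁, hN₁, h₁⟩ := S₁.exists_nat_bound a x
    rw [← circm_tmul_vac hS h₁ w 2 (by omega) (yy : M₂)]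
    have hg : a ⊗ₜ[ℂ] B.vacuum ∈ T.grade w := by
      have := mem_Tgrade hT ha B.vacuum_grade
      rwa [add_zero] at this
    exact Submodule.subset_span ⟨w, a ⊗ₜ[ℂ] B.vacuum, x ⊗ₜ[ℂ] (yy : M₂), hg, rfl⟩
  · show (0 : M₁) ⊗ₜ[ℂ] (yy : M₂) ∈ S.Osub
    rw [zero_tmul]; exact zero_mem _
  · intro u v _ _ hu hv
    show (u + v) ⊗ₜ[ℂ] (yy : M₂) ∈ S.Osub
    rw [add_tmul]; exact add_mem hu hv
  · intro c u _ hu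
    show (c • u) ⊗ₜ[ℂ] (yy : M₂) ∈ S.Osub
    rw [← TensorProduct.smul_tmul']; exact Submodule.smul_mem _ _ hu

/-- `M₁ ⊗ O(M₂) ⊆ O(M₁ ⊗ M₂)`. -/
lemma tsub_right_le_Osub (hT : IsTensorVOA A B T) (hS : IsTensorVMod S₁ S₂ S) :
    tsub (⊤ : Submodule ℂ M₁) S₂.Osub ≤ S.Osub := by
  show LinearMap.range _ ≤ _
  rw [TensorProduct.range_map_eq_span_tmul]
  refine Submodule.span_le.2 ?_
  rintro _ ⟨xx, o, rfl⟩
  simp only [Submodule.coe_subtype]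
  refine Submodule.span_induction (p := fun v _ => (xx : M₁) ⊗ₜ[ℂ] v ∈ S.Osub)
    ?_ ?_ ?_ ?_ o.2
  · rintro _ ⟨w, b, y, hb, rfl⟩
    show (xx : M₁) ⊗ₜ[ℂ] S₂.circm w 2 b y ∈ S.Osub
    obtain ⟨N₂, hN₂, h₂⟩ := S₂.exists_nat_bound b y
    rw [← circm_vac_tmul hS h₂ w 2 (by omega) (xx : M₁)]
    have hg : A.vacuum ⊗ₜ[ℂ] b ∈ T.grade w := by
      have := mem_Tgrade hT A.vacuum_grade hb
      rwa [zero_add] at this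
    exact Submodule.subset_span ⟨w, A.vacuum ⊗ₜ[ℂ] b, (xx : M₁) ⊗ₜ[ℂ] y, hg, rfl⟩
  · show (xx : M₁) ⊗ₜ[ℂ] (0 : M₂) ∈ S.Osub
    rw [tmul_zero]; exact zero_mem _
  · intro u v _ _ hu hv
    show (xx : M₁) ⊗ₜ[ℂ] (u + v) ∈ S.Osub
    rw [tmul_add]; exact add_mem hu hv
  · intro c u _ hu
    show (xx : M₁) ⊗ₜ[ℂ] (c • u) ∈ S.Osub
    rw [tmul_smul]; exact Submodule.smul_mem _ _ hu

/-- The main `O`-space identity. -/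
lemma Osub_eq_sup (hT : IsTensorVOA A B T) (hS : IsTensorVMod S₁ S₂ S) :
    S.Osub = tsub S₁.Osub (⊤ : Submodule ℂ M₂) ⊔ tsub (⊤ : Submodule ℂ M₁) S₂.Osub := by
  set J := tsub S₁.Osub (⊤ : Submodule ℂ M₂) ⊔ tsub (⊤ : Submodule ℂ M₁) S₂.Osub with hJ
  refine le_antisymm ?_ (sup_le (tsub_left_le_Osub hT hS) (tsub_right_le_Osub hT hS))
  show Submodule.span ℂ _ ≤ J
  refine Submodule.span_le.2 ?_
  rintro _ ⟨w, u, z, hu, rfl⟩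
  rw [hT.2.1 w] at hu
  refine Submodule.iSup_induction (motive := fun u => ∀ z', S.circm w 2 u z' ∈ J)
    _ hu ?_ ?_ ?_ z
  · -- u in a graded piece
    intro p u' hu'
    rw [show tsub (A.grade p) (B.grade (w - p)) = LinearMap.range _ from rfl,
      TensorProduct.range_map_eq_span_tmul] at hu'
    refine Submodule.span_induction (p := fun v _ => ∀ z', S.circm w 2 v z' ∈ J)
      ?_ ?_ ?_ ?_ hu'
    · rintro _ ⟨av, bv, rfl⟩ z'
      simp only [Submodule.coe_subtype]
      induction z' using TensorProduct.induction_on with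
      | zero =>
        rw [S.circm_zero_right]; exact zero_mem _
      | tmul x y =>
        obtain ⟨N₁, hN₁, h₁⟩ := S₁.exists_nat_bound (av : V₁) x
        obtain ⟨N₂, hN₂, h₂⟩ := S₂.exists_nat_bound (bv : V₂) y
        have hg := gen_factor hS p (w - p) 2 h₁ h₂
        rw [show p + (w - p) = w from by ring] at hg
        rw [hg]
        refine Submodule.sum_mem _ fun m _ => ?_
        by_cases hm : 2 ≤ m
        · refine Submodule.mem_sup_left (tmul_mem_tsub ?_ Submodule.mem_top)
          exact S₁.circm_mem_Osub av.2 x hm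
        · refine Submodule.mem_sup_right (tmul_mem_tsub Submodule.mem_top ?_)
          exact S₂.circm_mem_Osub bv.2 y (by omega)
      | add z₁ z₂ hz₁ hz₂ =>
        rw [S.circm_add_right]; exact add_mem hz₁ hz₂
    · intro z'
      rw [S.circm_zero_left]; exact zero_mem _
    · intro u₁ u₂ _ _ hu₁ hu₂ z'
      rw [S.circm_add_left]; exact add_mem (hu₁ z') (hu₂ z')
    · intro c u₁ _ hu₁ z'
      rw [S.circm_smul_left]; exact Submodule.smul_mem _ _ (hu₁ z')
  · intro z'
    rw [S.circm_zero_left]; exact zero_mem _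
  · intro u₁ u₂ hu₁ hu₂ z'
    rw [S.circm_add_left]; exact add_mem (hu₁ z') (hu₂ z')

end ZhuMain


section ZhuCong

open Finset TensorProduct

variable {V₁ V₂ : Type} [AddCommGroup V₁] [Module ℂ V₁] [AddCommGroup V₂] [Module ℂ V₂]
variable {M₁ M₂ : Type} [AddCommGroup M₁] [Module ℂ M₁] [AddCommGroup M₂] [Module ℂ M₂]
variable {A : VOA V₁} {B : VOA V₂} {T : VOA (V₁ ⊗[ℂ] V₂)}
variable {S₁ : VMod A M₁} {S₂ : VMod B M₂} {S : VMod T (M₁ ⊗[ℂ] M₂)}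

lemma zsmul_tmul {M₁ M₂ : Type} [AddCommGroup M₁] [Module ℂ M₁]
    [AddCommGroup M₂] [Module ℂ M₂] (z : ℤ) (u : M₁) (v : M₂) :
    (z • u) ⊗ₜ[ℂ] v = z • (u ⊗ₜ[ℂ] v) := by
  rw [← Int.cast_smul_eq_zsmul ℂ z u, ← Int.cast_smul_eq_zsmul ℂ z (u ⊗ₜ[ℂ] v), smul_tmul']

lemma tmul_zsmul {M₁ M₂ : Type} [AddCommGroup M₁] [Module ℂ M₁]
    [AddCommGroup M₂] [Module ℂ M₂] (z : ℤ) (u : M₁) (v : M₂) :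
    u ⊗ₜ[ℂ] (z • v) = z • (u ⊗ₜ[ℂ] v) := by
  rw [← Int.cast_smul_eq_zsmul ℂ z v, ← Int.cast_smul_eq_zsmul ℂ z (u ⊗ₜ[ℂ] v), tmul_smul]

/-- Left action congruence. -/
lemma actL_cong (hT : IsTensorVOA A B T) (hS : IsTensorVMod S₁ S₂ S)
    {w₁ w₂ : ℤ} {a : V₁} {b : V₂} (ha : a ∈ A.grade w₁) (hb : b ∈ B.grade w₂)
    (x : M₁) (y : M₂) :
    S.actL (w₁ + w₂) (a ⊗ₜ[ℂ] b) (x ⊗ₜ[ℂ] y)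
      - (S₁.actL w₁ a x) ⊗ₜ[ℂ] (S₂.actL w₂ b y) ∈ S.Osub := by
  rw [Osub_eq_sup hT hS]
  obtain ⟨N₁, hN₁, h₁⟩ := S₁.exists_nat_bound a x
  obtain ⟨N₂, hN₂, h₂⟩ := S₂.exists_nat_bound b y
  show S.circm (w₁ + w₂) 1 (a ⊗ₜ[ℂ] b) (x ⊗ₜ[ℂ] y) - _ ∈ _
  rw [gen_factor hS w₁ w₂ 1 h₁ h₂]
  have hmem : (1 : ℤ) ∈ Finset.Ico (1 - (N₁ : ℤ)) (1 + 1 + (N₂ : ℤ)) := by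
    rw [Finset.mem_Ico]; exact ⟨by omega, by omega⟩
  rw [← Finset.add_sum_erase _ _ hmem]
  have h11 : S₁.circm w₁ 1 a x ⊗ₜ[ℂ] S₂.circm w₂ (1 + 1 - 1) b y
      = (S₁.actL w₁ a x) ⊗ₜ[ℂ] (S₂.actL w₂ b y) := by
    norm_num
    rfl
  rw [h11, add_sub_cancel_left]
  refine Submodule.sum_mem _ fun m hm' => ?_
  simp only [Finset.mem_erase, Finset.mem_Ico] at hm'
  by_cases hm2 : 2 ≤ m
  · exact Submodule.mem_sup_left
      (tmul_mem_tsub (S₁.circm_mem_Osub ha x hm2) Submodule.mem_top)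
  · refine Submodule.mem_sup_right
      (tmul_mem_tsub Submodule.mem_top (S₂.circm_mem_Osub hb y (by omega)))

/-- Right action congruence. -/
lemma actR_cong (hT : IsTensorVOA A B T) (hS : IsTensorVMod S₁ S₂ S)
    {w₁ w₂ : ℤ} {a : V₁} {b : V₂} (ha : a ∈ A.grade w₁) (hb : b ∈ B.grade w₂)
    (x : M₁) (y : M₂) :
    S.actR (w₁ + w₂) (a ⊗ₜ[ℂ] b) (x ⊗ₜ[ℂ] y)
      - (S₁.actR w₁ a x) ⊗ₜ[ℂ] (S₂.actR w₂ b y) ∈ S.Osub := by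
  rw [Osub_eq_sup hT hS]
  set J := tsub S₁.Osub (⊤ : Submodule ℂ M₂) ⊔ tsub (⊤ : Submodule ℂ M₁) S₂.Osub with hJ
  obtain ⟨N₁, hN₁, h₁⟩ := S₁.exists_nat_bound a x
  obtain ⟨N₂, hN₂, h₂⟩ := S₂.exists_nat_bound b y
  have hR : S.actR (w₁ + w₂) (a ⊗ₜ[ℂ] b) (x ⊗ₜ[ℂ] y)
      = S.circm (w₁ + w₂ - 1) 1 (a ⊗ₜ[ℂ] b) (x ⊗ₜ[ℂ] y) := rfl
  rw [hR, show w₁ + w₂ - 1 = w₁ + (w₂ - 1) from by ring, gen_factor hS w₁ (w₂ - 1) 1 h₁ h₂]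
  set C₂ : M₂ := S₂.circm (w₂ - 1) 1 b y with hC₂
  set H : ℤ → M₁ ⊗[ℂ] M₂ := fun m =>
    if m = 1 then S₁.circm w₁ 1 a x ⊗ₜ[ℂ] C₂
    else if m ≤ 0 then (((-1 : ℤ) ^ ((1 - m).toNat)) • S₁.circm w₁ m a x) ⊗ₜ[ℂ] C₂
    else 0 with hH
  have hFH : ∀ m ∈ Finset.Ico (1 - (N₁ : ℤ)) (1 + 1 + (N₂ : ℤ)),
      (S₁.circm w₁ m a x) ⊗ₜ[ℂ] (S₂.circm (w₂ - 1) (1 + 1 - m) b y) - H m ∈ J := by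
    intro m _
    by_cases hm1 : m = 1
    · subst hm1
      have hev : H 1 = S₁.circm w₁ 1 a x ⊗ₜ[ℂ] C₂ := by
        rw [hH]; norm_num
      rw [hev, show (1 : ℤ) + 1 - 1 = 1 from by norm_num, ← hC₂, sub_self]
      exact zero_mem _
    · by_cases hm0 : m ≤ 0
      · have hev : H m = (S₁.circm w₁ m a x) ⊗ₜ[ℂ]
            (((-1 : ℤ) ^ ((1 - m).toNat)) • C₂) := by
          rw [hH]
          dsimp only
          rw [if_neg hm1, if_pos hm0, zsmul_tmul, tmul_zsmul]
        rw [hev, ← tmul_sub]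
        refine Submodule.mem_sup_right (tmul_mem_tsub Submodule.mem_top ?_)
        have halt := S₂.circm_alt hb y ((1 - m).toNat)
        have harg : (1 : ℤ) + (((1 - m).toNat : ℕ) : ℤ) = 1 + 1 - m := by
          push_cast; omega
        rw [harg] at halt
        exact halt
      · have hm2 : 2 ≤ m := by omega
        have hev : H m = 0 := by
          rw [hH]; dsimp only; rw [if_neg hm1, if_neg hm0]
        rw [hev, sub_zero]
        exact Submodule.mem_sup_left
          (tmul_mem_tsub (S₁.circm_mem_Osub ha x hm2) Submodule.mem_top)
  have hsumH : ∑ m ∈ Finset.Ico (1 - (N₁ : ℤ)) (1 + 1 + (N₂ : ℤ)), H m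
      = S₁.circm (w₁ - 1) 1 a x ⊗ₜ[ℂ] C₂ := by
    have hmem : (1 : ℤ) ∈ Finset.Ico (1 - (N₁ : ℤ)) (1 + 1 + (N₂ : ℤ)) := by
      rw [Finset.mem_Ico]; exact ⟨by omega, by omega⟩
    rw [← Finset.add_sum_erase _ _ hmem]
    have hH1 : H 1 = S₁.circm w₁ 1 a x ⊗ₜ[ℂ] C₂ := by rw [hH]; norm_num
    have herase : ∀ m ∈ (Finset.Ico (1 - (N₁ : ℤ)) (1 + 1 + (N₂ : ℤ))).erase 1,
        H m = if m ≤ 0 then (((-1 : ℤ) ^ ((1 - m).toNat)) • S₁.circm w₁ m a x) ⊗ₜ[ℂ] C₂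
          else 0 := by
      intro m hm
      rw [hH]
      dsimp only
      rw [if_neg (Finset.ne_of_mem_erase hm)]
    rw [Finset.sum_congr rfl herase, ← Finset.sum_filter]
    have hset : ((Finset.Ico (1 - (N₁ : ℤ)) (1 + 1 + (N₂ : ℤ))).erase 1).filter
        (fun m => m ≤ 0) = Finset.Ico (1 - (N₁ : ℤ)) 1 := by
      ext k
      simp only [Finset.mem_filter, Finset.mem_erase, Finset.mem_Ico]
      omega
    rw [hset]
    have hre : ∑ m ∈ Finset.Ico (1 - (N₁ : ℤ)) 1,
        (((-1 : ℤ) ^ ((1 - m).toNat)) • S₁.circm w₁ m a x) ⊗ₜ[ℂ] C₂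
        = ∑ j ∈ range N₁,
          (-(((-1 : ℤ) ^ j) • S₁.circm w₁ (-(j : ℤ)) a x)) ⊗ₜ[ℂ] C₂ := by
      refine Finset.sum_nbij' (fun m => (-m).toNat) (fun j => -(j : ℤ)) ?_ ?_ ?_ ?_ ?_
      · intro m hm
        simp only [Finset.mem_Ico] at hm
        simp only [Finset.mem_range]
        omega
      · intro j hj
        simp only [Finset.mem_range] at hj
        simp only [Finset.mem_Ico]
        omega
      · intro m hm
        simp only [Finset.mem_Ico] at hm
        show -(((-m).toNat : ℕ) : ℤ) = m
        omega
      · intro j _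
        show ((-(-(j : ℤ))).toNat : ℕ) = j
        omega
      · intro m hm
        simp only [Finset.mem_Ico] at hm
        have e2 : -((((-m).toNat : ℕ)) : ℤ) = m := by omega
        rw [e2]
        have e1 : (1 - m).toNat = (-m).toNat + 1 := by omega
        rw [e1, pow_succ, mul_neg_one, neg_smul]
    rw [hre]
    rw [← sum_tmul, hH1, ← add_tmul]
    congr 1
    have htel := S₁.actL_eq_actR_add w₁ a x h₁ (K := N₁) le_rfl
    rw [Finset.sum_neg_distrib, htel]
    abel
  have htotal : ∑ m ∈ Finset.Ico (1 - (N₁ : ℤ)) (1 + 1 + (N₂ : ℤ)),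
      ((S₁.circm w₁ m a x) ⊗ₜ[ℂ] (S₂.circm (w₂ - 1) (1 + 1 - m) b y) - H m) ∈ J :=
    Submodule.sum_mem _ hFH
  rw [Finset.sum_sub_distrib, hsumH] at htotal
  exact htotal

end ZhuCong


section ZhuFinal

open Finset TensorProduct

variable {M₁ M₂ : Type} [AddCommGroup M₁] [Module ℂ M₁] [AddCommGroup M₂] [Module ℂ M₂]

lemma tsub_left_eq_range (p : Submodule ℂ M₁) :
    tsub p (⊤ : Submodule ℂ M₂)
      = LinearMap.range (TensorProduct.map p.subtype (LinearMap.id : M₂ →ₗ[ℂ] M₂)) := by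
  show LinearMap.range _ = _
  rw [TensorProduct.range_map_eq_span_tmul, TensorProduct.range_map_eq_span_tmul]
  congr 1
  ext t
  simp only [Set.mem_setOf_eq, Submodule.coe_subtype, LinearMap.id_coe, id_eq]
  constructor
  · rintro ⟨m, n, rfl⟩; exact ⟨m, (n : M₂), rfl⟩
  · rintro ⟨m, n, rfl⟩; exact ⟨m, ⟨n, Submodule.mem_top⟩, rfl⟩

lemma tsub_right_eq_range (q : Submodule ℂ M₂) :
    tsub (⊤ : Submodule ℂ M₁) q
      = LinearMap.range (TensorProduct.map (LinearMap.id : M₁ →ₗ[ℂ] M₁) q.subtype) := by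
  show LinearMap.range _ = _
  rw [TensorProduct.range_map_eq_span_tmul, TensorProduct.range_map_eq_span_tmul]
  congr 1
  ext t
  simp only [Set.mem_setOf_eq, Submodule.coe_subtype, LinearMap.id_coe, id_eq]
  constructor
  · rintro ⟨m, n, rfl⟩; exact ⟨(m : M₁), n, rfl⟩
  · rintro ⟨m, n, rfl⟩; exact ⟨⟨m, Submodule.mem_top⟩, n, rfl⟩

end ZhuFinal


/-- for irreducible modules `M₁`, `M₂` over `V₁`, `V₂`, one has
`O(M₁ ⊗ M₂) = O(M₁) ⊗ M₂ + M₁ ⊗ O(M₂)`, and `[m₁ ⊗ m₂] ↦ [m₁] ⊗ [m₂]` is an isomorphism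
`A(M₁ ⊗ M₂) ≅ A(M₁) ⊗ A(M₂)` of bimodules over `A(V₁) ⊗ A(V₂) ≅ A(V₁ ⊗ V₂)`, i.e. it
intertwines the left and right `A(V)`-actions computed on representatives. -/
theorem zhu_bimodule_tensor_iso {V₁ V₂ : Type}
    [AddCommGroup V₁] [Module ℂ V₁] [AddCommGroup V₂] [Module ℂ V₂]
    (A : VOA V₁) (B : VOA V₂) (T : VOA (V₁ ⊗[ℂ] V₂)) (hT : IsTensorVOA A B T)
    (M₁ M₂ : Type) [AddCommGroup M₁] [Module ℂ M₁] [AddCommGroup M₂] [Module ℂ M₂]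
    (S₁ : VMod A M₁) (S₂ : VMod B M₂) (S : VMod T (M₁ ⊗[ℂ] M₂))
    (hS : IsTensorVMod S₁ S₂ S)
    (h₁ : S₁.Irreducible) (h₂ : S₂.Irreducible) :
    S.Osub = tsub S₁.Osub (⊤ : Submodule ℂ M₂) ⊔ tsub (⊤ : Submodule ℂ M₁) S₂.Osub ∧
    ∃ e : ((M₁ ⊗[ℂ] M₂) ⧸ S.Osub) ≃ₗ[ℂ] ((M₁ ⧸ S₁.Osub) ⊗[ℂ] (M₂ ⧸ S₂.Osub)),
      (∀ (x : M₁) (y : M₂),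
        e (Submodule.Quotient.mk (x ⊗ₜ[ℂ] y)) =
          Submodule.Quotient.mk x ⊗ₜ[ℂ] Submodule.Quotient.mk y) ∧
      (∀ (w₁ w₂ : ℤ) (a : V₁) (b : V₂), a ∈ A.grade w₁ → b ∈ B.grade w₂ →
        ∀ (x : M₁) (y : M₂),
        e (Submodule.Quotient.mk (S.actL (w₁ + w₂) (a ⊗ₜ[ℂ] b) (x ⊗ₜ[ℂ] y))) =
          Submodule.Quotient.mk (S₁.actL w₁ a x) ⊗ₜ[ℂ]
            Submodule.Quotient.mk (S₂.actL w₂ b y)) ∧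
      (∀ (w₁ w₂ : ℤ) (a : V₁) (b : V₂), a ∈ A.grade w₁ → b ∈ B.grade w₂ →
        ∀ (x : M₁) (y : M₂),
        e (Submodule.Quotient.mk (S.actR (w₁ + w₂) (a ⊗ₜ[ℂ] b) (x ⊗ₜ[ℂ] y))) =
          Submodule.Quotient.mk (S₁.actR w₁ a x) ⊗ₜ[ℂ]
            Submodule.Quotient.mk (S₂.actR w₂ b y)) := by
  have hOeq := Osub_eq_sup hT hS
  refine ⟨hOeq, ?_⟩
  have hEq : (LinearMap.range (TensorProduct.map S₁.Osub.subtype LinearMap.id) ⊔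
      LinearMap.range (TensorProduct.map LinearMap.id S₂.Osub.subtype)) = S.Osub := by
    rw [hOeq, tsub_left_eq_range, tsub_right_eq_range]
  set e := (TensorProduct.quotientTensorQuotientEquiv S₁.Osub S₂.Osub ≪≫ₗ
    Submodule.quotEquivOfEq _ _ hEq).symm with he
  have hprop1 : ∀ (x : M₁) (y : M₂),
      e (Submodule.Quotient.mk (x ⊗ₜ[ℂ] y)) =
        Submodule.Quotient.mk x ⊗ₜ[ℂ] Submodule.Quotient.mk y := by
    intro x y
    have hfwd : (TensorProduct.quotientTensorQuotientEquiv S₁.Osub S₂.Osub ≪≫ₗ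
        Submodule.quotEquivOfEq _ _ hEq)
        ((Submodule.Quotient.mk x : M₁ ⧸ S₁.Osub) ⊗ₜ[ℂ]
          (Submodule.Quotient.mk y : M₂ ⧸ S₂.Osub))
        = Submodule.Quotient.mk (x ⊗ₜ[ℂ] y) := by
      rw [LinearEquiv.trans_apply,
        TensorProduct.quotientTensorQuotientEquiv_apply_tmul_mk_tmul_mk,
        Submodule.quotEquivOfEq_mk]
    rw [he, ← hfwd, LinearEquiv.symm_apply_apply]
  refine ⟨e, hprop1, ?_, ?_⟩
  · intro w₁ w₂ a b ha hb x y
    have hc := actL_cong hT hS ha hb x y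
    have hmk : (Submodule.Quotient.mk (S.actL (w₁ + w₂) (a ⊗ₜ[ℂ] b) (x ⊗ₜ[ℂ] y))
        : (M₁ ⊗[ℂ] M₂) ⧸ S.Osub)
        = Submodule.Quotient.mk ((S₁.actL w₁ a x) ⊗ₜ[ℂ] (S₂.actL w₂ b y)) :=
      (Submodule.Quotient.eq _).mpr hc
    rw [hmk]
    exact hprop1 _ _
  · intro w₁ w₂ a b ha hb x y
    have hc := actR_cong hT hS ha hb x y
    have hmk : (Submodule.Quotient.mk (S.actR (w₁ + w₂) (a ⊗ₜ[ℂ] b) (x ⊗ₜ[ℂ] y))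
        : (M₁ ⊗[ℂ] M₂) ⧸ S.Osub)
        = Submodule.Quotient.mk ((S₁.actR w₁ a x) ⊗ₜ[ℂ] (S₂.actR w₂ b y)) :=
      (Submodule.Quotient.eq _).mpr hc
    rw [hmk]
    exact hprop1 _ _

end
end

section
/- Let A be an associative unital algebra over an algebraically closed field k, M a finite-dimensional simple (A ⊗ B)-module for a unital k-algebra B, and M₁ ⊆ M a simple A-submodule. Set M₂ = Hom_A(M₁, M). Then M₂ is a B-module via (b·f)(m) = (1⊗b)·f(m), and the evaluation map M₁ ⊗ M₂ → M, m ⊗ f ↦ f(m), is an isomorphism of (A⊗B)-modules. -/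
open scoped TensorProduct


open scoped TensorProduct

section Aux

variable (k A : Type*) [Field k] [Ring A] [Algebra k A]

/-- A simple module is semisimple. -/
theorem aux_simple_semisimple (R M : Type*) [Ring R] [AddCommGroup M] [Module R M]
    [IsSimpleModule R M] : IsSemisimpleModule R M :=
  { exists_isCompl := fun N => (eq_bot_or_eq_top N).elim (fun h => ⟨⊤, h ▸ isCompl_bot_top⟩)
      (fun h => ⟨⊥, h ▸ isCompl_top_bot⟩) }

/-- A finite power of a simple module is semisimple. -/
theorem aux_pi_semisimple (R M : Type*) [Ring R] [AddCommGroup M] [Module R M]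
    [IsSimpleModule R M] (ι : Type*) [Finite ι] [DecidableEq ι] :
    IsSemisimpleModule R (ι → M) := by
  haveI := aux_simple_semisimple R M
  refine isSemisimpleModule_of_isSemisimpleModule_submodule'
    (p := fun i => LinearMap.range (LinearMap.single R (fun _ : ι => M) i)) (fun i => ?_)
    (LinearMap.iSup_range_single R _)
  exact IsSemisimpleModule.congr
    (LinearEquiv.ofInjective _ (Pi.single_injective (M := fun _ : ι => M) i)).symm

/-- Schur + algebraically closed: endomorphisms of a finite-dimensional simple module
are scalars. -/
theorem aux_end_scalar [IsAlgClosed k] (M₁ : Type*) [AddCommGroup M₁] [Module k M₁]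
    [Module A M₁] [IsScalarTower k A M₁] [FiniteDimensional k M₁] [IsSimpleModule A M₁]
    (φ : M₁ →ₗ[A] M₁) : ∃ c : k, ∀ x, φ x = c • x := by
  haveI : Nontrivial M₁ := IsSimpleModule.nontrivial A M₁
  haveI : SMulCommClass A k M₁ := SMulCommClass.symm _ _ _
  obtain ⟨c, hc⟩ := Module.End.exists_eigenvalue (φ.restrictScalars k : Module.End k M₁)
  obtain ⟨v, hv⟩ := hc.exists_hasEigenvector
  refine ⟨c, fun x => ?_⟩
  have h0 : (φ - c • LinearMap.id : M₁ →ₗ[A] M₁) = 0 := by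
    rcases LinearMap.injective_or_eq_zero (φ - c • LinearMap.id) with h | h
    · exfalso
      apply hv.2
      have : (φ - c • LinearMap.id : M₁ →ₗ[A] M₁) v = 0 := by
        simp only [LinearMap.sub_apply, LinearMap.smul_apply, LinearMap.id_apply, sub_eq_zero]
        exact hv.apply_eq_smul
      exact h (by simpa using this)
    · exact h
  have := LinearMap.congr_fun h0 x
  simpa [sub_eq_zero] using this

end Aux

section Aux2

variable (k A : Type*) [Field k] [IsAlgClosed k] [Ring A] [Algebra k A]
variable (M₁ M : Type*)
variable [AddCommGroup M₁] [Module k M₁] [Module A M₁] [IsScalarTower k A M₁]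
variable [AddCommGroup M] [Module k M] [Module A M] [IsScalarTower k A M]
variable [FiniteDimensional k M₁] [IsSimpleModule A M₁]


/-- A surjection from a semisimple module splits. -/
theorem aux_exists_section (R N P : Type*) [Ring R] [AddCommGroup N] [Module R N]
    [AddCommGroup P] [Module R P] [IsSemisimpleModule R N]
    (f : N →ₗ[R] P) (hf : Function.Surjective f) :
    ∃ σ : P →ₗ[R] N, ∀ y, f (σ y) = y := by
  obtain ⟨q, hq⟩ := exists_isCompl (LinearMap.ker f)
  let e1 := f.quotKerEquivOfSurjective hf
  let e2 := Submodule.quotientEquivOfIsCompl (LinearMap.ker f) q hq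
  refine ⟨q.subtype ∘ₗ (e1.symm.trans e2 : P →ₗ[R] q), fun y => ?_⟩
  have h1 : ∀ n : N, e1 (Submodule.Quotient.mk n) = f n := fun n => rfl
  have h2 : (Submodule.Quotient.mk ((e2 (e1.symm y) : q) : N) : N ⧸ LinearMap.ker f)
      = e1.symm y := Submodule.mk_quotientEquivOfIsCompl_apply hq _
  have := congrArg e1 h2
  rw [h1, e1.apply_symm_apply] at this
  exact this

set_option synthInstance.maxHeartbeats 1000000 in
set_option maxHeartbeats 1000000 in
theorem aux_coeffs_zero {η : Type*} {b : η → (M₁ →ₗ[A] M)}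
    (hb : LinearIndependent k b)
    (c : η →₀ M₁) (h : (c.sum fun i m => b i m) = 0) : c = 0 := by
  classical
  by_contra hc
  obtain ⟨j, hj⟩ : ∃ j, c j ≠ 0 := by
    by_contra h'
    push_neg at h'
    exact hc (Finsupp.ext h')
  set s : Finset η := c.support with hs
  have hjs : j ∈ s := Finsupp.mem_support_iff.2 hj
  let Φ : ((i : s) → M₁) →ₗ[A] M := LinearMap.lsum A (fun _ : s => M₁) ℕ (fun i => b i)
  have hΦ : ∀ x : (i : s) → M₁, Φ x = ∑ i : s, b i (x i) := by
    intro x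
    simp [Φ, LinearMap.lsum_apply, LinearMap.sum_apply]
  let x₀ : (i : s) → M₁ := fun i => c i
  have hx₀ : Φ x₀ = 0 := by
    rw [hΦ]
    rw [Finset.sum_coe_sort s (fun i => b i (c i))]
    simpa [Finsupp.sum] using h
  let K := LinearMap.ker Φ
  let π : K →ₗ[A] M₁ := (LinearMap.proj (⟨j, hjs⟩ : s)).comp K.subtype
  have hπx₀ : π ⟨x₀, hx₀⟩ = c j := rfl
  have hπsurj : Function.Surjective π := by
    rw [← LinearMap.range_eq_top]
    rcases eq_bot_or_eq_top (LinearMap.range π) with hbot | htop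
    · exfalso
      apply hj
      rw [← hπx₀]
      have : π ⟨x₀, hx₀⟩ ∈ LinearMap.range π := LinearMap.mem_range_self _ _
      rw [hbot] at this
      simpa using this
    · exact htop
  haveI : IsSemisimpleModule A ((i : s) → M₁) := aux_pi_semisimple A M₁ s
  haveI : IsSemisimpleModule A K := IsSemisimpleModule.submodule A _
  obtain ⟨σ₀, hσ₀⟩ := aux_exists_section A K M₁ π hπsurj
  let σ : M₁ →ₗ[A] ((i : s) → M₁) := K.subtype.comp σ₀
  have hσK : ∀ y, Φ (σ y) = 0 := fun y => (σ₀ y).2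
  have hσj : ∀ y, σ y ⟨j, hjs⟩ = y := fun y => hσ₀ y
  have hcomp : ∀ i : s, ∃ dd : k, ∀ y, σ y i = dd • y := by
    intro i
    obtain ⟨dd, hdd⟩ := aux_end_scalar k A M₁ ((LinearMap.proj i).comp σ)
    exact ⟨dd, fun y => hdd y⟩
  choose d hd using hcomp
  have hrel : (∑ i : s, d i • b i) = 0 := by
    ext y
    have h1 := hσK y
    rw [hΦ] at h1
    have h2 : ∀ i : s, b i (σ y i) = d i • b i y := by
      intro i
      rw [hd i y, LinearMap.map_smul_of_tower]
    rw [Finset.sum_congr rfl (fun i _ => h2 i)] at h1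
    simpa [LinearMap.sum_apply] using h1
  let D : η → k := fun i => if hi : i ∈ s then d ⟨i, hi⟩ else 0
  have hrel' : (∑ i ∈ s, D i • b i) = 0 := by
    rw [← Finset.sum_coe_sort s (fun i => D i • b i)]
    rw [← hrel]
    refine Finset.sum_congr rfl fun i _ => ?_
    simp only [D, dif_pos i.2]
  have hDj : D j = 0 := linearIndependent_iff'.1 hb s D hrel' j hjs
  have hdj : d ⟨j, hjs⟩ = 0 := by simpa [D, dif_pos hjs] using hDj
  haveI : Nontrivial M₁ := IsSimpleModule.nontrivial A M₁
  obtain ⟨y, hy⟩ := exists_ne (0 : M₁)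
  apply hy
  have := hσj y
  rw [hd ⟨j, hjs⟩ y, hdj, zero_smul] at this
  exact this.symm

theorem aux_ev_injective (ev : M₁ ⊗[k] (M₁ →ₗ[A] M) →ₗ[k] M)
    (hev : ∀ (m : M₁) (f : M₁ →ₗ[A] M), ev (m ⊗ₜ[k] f) = f m) :
    Function.Injective ev := by
  classical
  rw [injective_iff_map_eq_zero]
  intro t ht
  let b := Module.Basis.ofVectorSpace k (M₁ →ₗ[A] M)
  let ψ := TensorProduct.equivFinsuppOfBasisRight (M := M₁) b
  have hrepr : t = (ψ t).sum fun i m => m ⊗ₜ[k] b i := by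
    conv_lhs => rw [← ψ.symm_apply_apply t]
    rw [TensorProduct.equivFinsuppOfBasisRight_symm_apply]
  have hev0 : ((ψ t).sum fun i m => b i m) = 0 := by
    rw [← ht]
    conv_rhs => rw [hrepr]
    rw [map_finsuppSum]
    refine Finsupp.sum_congr fun i _ => ?_
    exact (hev _ _).symm
  have : ψ t = 0 := aux_coeffs_zero k A M₁ M b.linearIndependent (ψ t) hev0
  rw [hrepr, this, Finsupp.sum_zero_index]

end Aux2

/-- The canonical `A ⊗[k] B`-module structure on `M ⊗[k] N`, where `A` acts on the
first factor and `B` on the second: `(a ⊗ b) • (m ⊗ n) = (a • m) ⊗ (b • n)`. -/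
noncomputable def tensorAction (k A B M N : Type) [CommRing k] [Ring A] [Ring B]
    [Algebra k A] [Algebra k B] [AddCommGroup M] [Module k M] [AddCommGroup N] [Module k N]
    [Module A M] [IsScalarTower k A M] [Module B N] [IsScalarTower k B N] :
    Module (A ⊗[k] B) (M ⊗[k] N) :=
  Module.compHom _ (((Module.endTensorEndAlgHom (R := k) (S := k) (A := k)).comp
    (Algebra.TensorProduct.map (Algebra.lsmul k k M) (Algebra.lsmul k k N))).toRingHom)

/-- let `M` be a finite-dimensional simple `A ⊗[k] B`-module over an
algebraically closed field `k`, `A` acting via `a ↦ a ⊗ 1` and `B` via `b ↦ 1 ⊗ b`.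
If `M₁` is a simple `A`-submodule of `M` (given by an injective `A`-linear map `ι`),
and `M₂ = Hom_A(M₁, M)` with the `B`-action `(b·f)(m) = (1 ⊗ b)·f(m)`, then the
evaluation map `M₁ ⊗ M₂ → M`, `m ⊗ f ↦ f m`, is an isomorphism of `A ⊗[k] B`-modules. -/
theorem evaluation_isotypic_equiv
    (k A B : Type) [Field k] [IsAlgClosed k] [Ring A] [Ring B] [Algebra k A] [Algebra k B]
    (M : Type) [AddCommGroup M] [Module k M] [Module (A ⊗[k] B) M]
    [IsScalarTower k (A ⊗[k] B) M] [FiniteDimensional k M]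
    (hM : IsSimpleModule (A ⊗[k] B) M) :
    letI modA : Module A M :=
      Module.compHom M (Algebra.TensorProduct.includeLeft (R := k) (S := k)
        (A := A) (B := B)).toRingHom
    letI modB : Module B M :=
      Module.compHom M (Algebra.TensorProduct.includeRight (R := k) (A := A)
        (B := B)).toRingHom
    haveI towerA : IsScalarTower k A M :=
      ⟨fun c a x => by
        show (Algebra.TensorProduct.includeLeft (R := k) (S := k) (A := A) (B := B)
          (c • a)) • x = c • (Algebra.TensorProduct.includeLeft (R := k) (S := k)
            (A := A) (B := B) a) • x
        rw [map_smul, smul_assoc]⟩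
    haveI towerB : IsScalarTower k B M :=
      ⟨fun c b x => by
        show (Algebra.TensorProduct.includeRight (R := k) (A := A) (B := B)
          (c • b)) • x = c • (Algebra.TensorProduct.includeRight (R := k) (A := A)
            (B := B) b) • x
        rw [map_smul, smul_assoc]⟩
    haveI hcomm : SMulCommClass A B M :=
      ⟨fun a b x => by
        show (Algebra.TensorProduct.includeLeft (R := k) (S := k) (A := A) (B := B) a) •
            (Algebra.TensorProduct.includeRight (R := k) (A := A) (B := B) b) • x =
          (Algebra.TensorProduct.includeRight (R := k) (A := A) (B := B) b) •
            (Algebra.TensorProduct.includeLeft (R := k) (S := k) (A := A) (B := B) a) • x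
        rw [← mul_smul, ← mul_smul]
        congr 1
        simp [Algebra.TensorProduct.tmul_mul_tmul]⟩
    ∀ (M₁ : Type) [AddCommGroup M₁] [Module k M₁] [Module A M₁] [IsScalarTower k A M₁]
      (ι : M₁ →ₗ[A] M), Function.Injective ι → IsSimpleModule A M₁ →
    haveI hcommk : SMulCommClass A k M := SMulCommClass.symm k A M
    haveI towerB₂ : IsScalarTower k B (M₁ →ₗ[A] M) :=
      ⟨fun c b f => LinearMap.ext fun x => by
        simp only [LinearMap.smul_apply]
        exact smul_assoc c b (f x)⟩
    letI := tensorAction k A B M₁ (M₁ →ₗ[A] M)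
    ∃ e : (M₁ ⊗[k] (M₁ →ₗ[A] M)) ≃ₗ[A ⊗[k] B] M,
      ∀ (m : M₁) (f : M₁ →ₗ[A] M), e (m ⊗ₜ[k] f) = f m := by
  intro M₁ instM₁add instM₁k instM₁A instM₁tower ι hι hsimp
  letI modA : Module A M :=
    Module.compHom M (Algebra.TensorProduct.includeLeft (R := k) (S := k)
      (A := A) (B := B)).toRingHom
  letI modB : Module B M :=
    Module.compHom M (Algebra.TensorProduct.includeRight (R := k) (A := A)
      (B := B)).toRingHom
  haveI towerA : IsScalarTower k A M :=
    ⟨fun c a x => by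
      show (Algebra.TensorProduct.includeLeft (R := k) (S := k) (A := A) (B := B)
        (c • a)) • x = c • (Algebra.TensorProduct.includeLeft (R := k) (S := k)
          (A := A) (B := B) a) • x
      rw [map_smul, smul_assoc]⟩
  haveI towerB : IsScalarTower k B M :=
    ⟨fun c b x => by
      show (Algebra.TensorProduct.includeRight (R := k) (A := A) (B := B)
        (c • b)) • x = c • (Algebra.TensorProduct.includeRight (R := k) (A := A)
          (B := B) b) • x
      rw [map_smul, smul_assoc]⟩
  haveI hcomm : SMulCommClass A B M :=
    ⟨fun a b x => by
      show (Algebra.TensorProduct.includeLeft (R := k) (S := k) (A := A) (B := B) a) •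
          (Algebra.TensorProduct.includeRight (R := k) (A := A) (B := B) b) • x =
        (Algebra.TensorProduct.includeRight (R := k) (A := A) (B := B) b) •
          (Algebra.TensorProduct.includeLeft (R := k) (S := k) (A := A) (B := B) a) • x
      rw [← mul_smul, ← mul_smul]
      congr 1
      simp [Algebra.TensorProduct.tmul_mul_tmul]⟩
  letI instT := tensorAction k A B M₁ (M₁ →ₗ[A] M)
  haveI : IsSimpleModule A M₁ := hsimp
  haveI : FiniteDimensional k M₁ :=
    FiniteDimensional.of_injective (ι.restrictScalars k) hι
  have smulA : ∀ (a : A) (x : M), a • x = (a ⊗ₜ[k] (1 : B)) • x := fun a x => rfl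
  have smulB : ∀ (b : B) (x : M), b • x = ((1 : A) ⊗ₜ[k] b) • x := fun b x => rfl
  -- the evaluation map, as a k-linear map
  let evbil : M₁ →ₗ[k] (M₁ →ₗ[A] M) →ₗ[k] M :=
    LinearMap.mk₂ k (fun m f => f m)
      (fun m m' f => map_add f m m')
      (fun c m f => LinearMap.map_smul_of_tower f c m)
      (fun m f g => rfl)
      (fun c m f => rfl)
  let ev : (M₁ ⊗[k] (M₁ →ₗ[A] M)) →ₗ[k] M := TensorProduct.lift evbil
  have hev : ∀ (m : M₁) (f : M₁ →ₗ[A] M), ev (m ⊗ₜ[k] f) = f m := fun m f => rfl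
  have smulT : ∀ (a : A) (bb : B) (m : M₁) (f : M₁ →ₗ[A] M),
      (a ⊗ₜ[k] bb) • (m ⊗ₜ[k] f) = (a • m) ⊗ₜ[k] (bb • f) := by
    intro a bb m f
    show (Module.endTensorEndAlgHom (R := k) (S := k) (A := k)
      ((Algebra.TensorProduct.map (Algebra.lsmul k k M₁)
        (Algebra.lsmul k k (M₁ →ₗ[A] M))) (a ⊗ₜ[k] bb))) (m ⊗ₜ[k] f) = _
    rw [Algebra.TensorProduct.map_tmul, Module.endTensorEndAlgHom_apply,
      TensorProduct.AlgebraTensorModule.map_tmul]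
    rfl
  let ev' : (M₁ ⊗[k] (M₁ →ₗ[A] M)) →ₗ[A ⊗[k] B] M :=
    { toFun := ev
      map_add' := map_add ev
      map_smul' := by
        intro r x
        simp only [RingHom.id_apply]
        induction r using TensorProduct.induction_on with
        | zero => rw [zero_smul, zero_smul, map_zero]
        | tmul a bb =>
          induction x using TensorProduct.induction_on with
          | zero => rw [smul_zero, map_zero, smul_zero]
          | tmul m f =>
            rw [smulT, hev, hev, LinearMap.smul_apply, map_smul,
              smulA a (f m), smulB bb ((a ⊗ₜ[k] (1 : B)) • f m), ← mul_smul]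
            congr 1
            simp [Algebra.TensorProduct.tmul_mul_tmul]
          | add x y hx hy => rw [smul_add, map_add, map_add, hx, hy, smul_add]
        | add r r' hr hr' => rw [add_smul, map_add, hr, hr', add_smul] }
  have hev' : ∀ (m : M₁) (f : M₁ →ₗ[A] M), ev' (m ⊗ₜ[k] f) = f m := fun m f => rfl
  have hinj : Function.Injective ev' := aux_ev_injective k A M₁ M ev hev
  have hsurj : Function.Surjective ev' := by
    rw [← LinearMap.range_eq_top]
    rcases eq_bot_or_eq_top (LinearMap.range ev') with hbot | htop
    · exfalso
      haveI : Nontrivial M₁ := IsSimpleModule.nontrivial A M₁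
      obtain ⟨m, hm⟩ := exists_ne (0 : M₁)
      have h1 : ev' (m ⊗ₜ[k] ι) ∈ LinearMap.range ev' := LinearMap.mem_range_self _ _
      rw [hbot, Submodule.mem_bot, hev'] at h1
      exact hm (hι (by simpa using h1))
    · exact htop
  exact ⟨LinearEquiv.ofBijective ev' ⟨hinj, hsurj⟩, fun m f => hev' m f⟩
end
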